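/- For every positive root α ∈ Δ⁺ of E₈, the cardinality of the set {β ∈ Δ⁺ : β − α ∈ Δ⁺} is at most 28, with equality if and only if α is a simple root (α ∈ Π). -/

import Mathlib

open scoped BigOperators RealInnerProductSpace

noncomputable section

abbrev E8Space : Type := EuclideanSpace ℝ (Fin 8)

/-- The E₈ root system: vectors of square-norm 2 whose coordinates are either all
integers or all half-integers, with even coordinate sum. -/
def E8Delta : Set E8Space :=
  {v | ⟪v, v⟫ = 2 ∧
    ((∀ i : Fin 8, ∃ n : ℤ, v i = (n : ℝ)) ∨
     (∀ i : Fin 8, ∃ n : ℤ, v i = (n : ℝ) + 1 / 2)) ∧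
    ∃ m : ℤ, (∑ i : Fin 8, v i) = 2 * (m : ℝ)}

/-- The simple roots α₁,…,α₈ of E₈ (indexed by `Fin 8`, so `simpleRootE8 0 = α₁`). -/
def simpleRootE8 : Fin 8 → E8Space :=
  fun i => WithLp.toLp 2 ((![![1/2, -1/2, -1/2, -1/2, -1/2, -1/2, -1/2, 1/2],
    ![0, 0, 0, 0, 0, -1, 1, 0],
    ![0, 0, 0, 0, -1, 1, 0, 0],
    ![0, 0, 0, -1, 1, 0, 0, 0],
    ![0, 0, -1, 1, 0, 0, 0, 0],
    ![1, 1, 0, 0, 0, 0, 0, 0],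
    ![0, -1, 1, 0, 0, 0, 0, 0],
    ![-1, 1, 0, 0, 0, 0, 0, 0]] : Fin 8 → Fin 8 → ℝ) i)

/-- The positive roots of E₈: the roots that are ℕ-linear combinations of the
simple roots. -/
def E8PosRoots : Set E8Space :=
  {α ∈ E8Delta | ∃ c : Fin 8 → ℕ, α = ∑ i, (c i : ℝ) • simpleRootE8 i}

/-! In doubled coordinates `f = 2v` the roots of E₈ are the integer vectors with `f ⬝ᵥ f = 8`,
all entries of one parity and `4 ∣ ∑ fᵢ`; their entries lie in `{-2, 0, 2}` or in `{-1, 1}`, so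
an enumeration pruned by the norm lists them all. Pairing with the fundamental weights reads off
the coefficients of a vector in the basis of simple roots, which decides positivity. For positive
roots `α, β`, the difference `β - α` is a root iff `⟪α, β⟫ = 1`, and it is then positive iff each
coefficient of `β` dominates that of `α`. What is left is a check over the `120 × 120` pairs of
positive roots, carried out by the kernel. -/

open Matrix

def sqNormVecs (D : List ℤ) : (n : ℕ) → ℤ → List (Fin n → ℤ)
  | 0, b => if b = 0 then [Fin.elim0] else []
  | n + 1, b => D.flatMap fun x =>
      if x * x ≤ b then (sqNormVecs D n (b - x * x)).map (Fin.cons x) else []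

theorem mem_sqNormVecs {D : List ℤ} {n : ℕ} {b : ℤ} {f : Fin n → ℤ} :
    f ∈ sqNormVecs D n b ↔ (∀ i, f i ∈ D) ∧ f ⬝ᵥ f = b := by
  induction n generalizing b with
  | zero =>
    rw [sqNormVecs, Subsingleton.elim f Fin.elim0]
    split_ifs with hb <;> simp [hb, eq_comm]
  | succ n ih =>
    simp only [sqNormVecs, List.mem_flatMap, List.mem_ite_nil_right, List.mem_map, ih,
      Fin.forall_fin_succ, dotProduct, Fin.sum_univ_succ]
    constructor
    · rintro ⟨x, hx, hxb, g, ⟨hg, hgb⟩, rfl⟩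
      simp only [Fin.cons_zero, Fin.cons_succ]
      exact ⟨⟨hx, hg⟩, by linarith⟩
    · rintro ⟨⟨h0, hs⟩, hb⟩
      have : 0 ≤ ∑ i : Fin n, f i.succ * f i.succ :=
        Finset.sum_nonneg fun i _ => mul_self_nonneg _
      exact ⟨f 0, h0, by linarith, Fin.tail f, ⟨hs, by simp only [Fin.tail]; linarith⟩,
        Fin.cons_self_tail f⟩

theorem nodup_sqNormVecs {D : List ℤ} (hD : D.Nodup) (n : ℕ) (b : ℤ) :
    (sqNormVecs D n b).Nodup := by
  induction n generalizing b with
  | zero => rw [sqNormVecs]; split_ifs <;> simp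
  | succ n ih =>
    refine List.nodup_flatMap.2 ⟨fun x _ => ?_, hD.imp fun {x y} hxy => ?_⟩
    · split_ifs
      exacts [(ih _).map (Fin.cons_right_injective (α := fun _ => ℤ) x), List.nodup_nil]
    · refine List.disjoint_left.2 fun f hfx hfy => hxy ?_
      simp only [List.mem_ite_nil_right, List.mem_map] at hfx hfy
      obtain ⟨-, g, -, rfl⟩ := hfx
      obtain ⟨-, h, -, hh⟩ := hfy
      simpa using (congr_fun hh 0).symm

section HalfVec

variable {ι : Type*}

def halfVec : (ι → ℤ) →+ EuclideanSpace ℝ ι where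
  toFun f := WithLp.toLp 2 fun i => (f i : ℝ) / 2
  map_zero' := by ext; simp
  map_add' f g := by ext; simp [add_div]

@[simp]
theorem halfVec_apply (f : ι → ℤ) (i : ι) : halfVec f i = (f i : ℝ) / 2 := rfl

theorem halfVec_injective : Function.Injective (halfVec : (ι → ℤ) → EuclideanSpace ℝ ι) :=
  fun f g h => funext fun i => by simpa using congr_arg (· i) h

theorem inner_halfVec [Fintype ι] (f g : ι → ℤ) :
    ⟪halfVec f, halfVec g⟫ = ((f ⬝ᵥ g : ℤ) : ℝ) / 4 := by
  simp only [PiLp.inner_apply, halfVec_apply, RCLike.inner_apply, conj_trivial, dotProduct,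
    Int.cast_sum, Int.cast_mul, Finset.sum_div]
  exact Finset.sum_congr rfl fun i _ => by ring

theorem sum_halfVec [Fintype ι] (f : ι → ℤ) : ∑ i, halfVec f i = ((∑ i, f i : ℤ) : ℝ) / 2 := by
  simp [Finset.sum_div]

theorem exists_halfVec_eq_iff (P : ℤ → Prop) (v : EuclideanSpace ℝ ι) :
    (∃ f, (∀ i, P (f i)) ∧ halfVec f = v) ↔ ∀ i, ∃ k, P k ∧ v i = k / 2 := by
  rw [Classical.skolem]
  refine exists_congr fun f => ?_
  simp only [forall_and, PiLp.ext_iff, halfVec_apply, eq_comm]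

end HalfVec

theorem exists_intCast_eq_iff (x : ℝ) : (∃ n : ℤ, x = n) ↔ ∃ k : ℤ, Even k ∧ x = k / 2 := by
  constructor
  · rintro ⟨n, rfl⟩
    exact ⟨n + n, Even.add_self n, by push_cast; ring⟩
  · rintro ⟨k, ⟨n, rfl⟩, rfl⟩
    exact ⟨n, by push_cast; ring⟩

theorem exists_intCast_add_half_eq_iff (x : ℝ) :
    (∃ n : ℤ, x = n + 1 / 2) ↔ ∃ k : ℤ, Odd k ∧ x = k / 2 := by
  constructor
  · rintro ⟨n, rfl⟩
    exact ⟨2 * n + 1, odd_two_mul_add_one n, by push_cast; ring⟩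
  · rintro ⟨k, ⟨n, rfl⟩, rfl⟩
    exact ⟨n, by push_cast; ring⟩

theorem exists_natCast_vecMul_eq_iff {n : Type*} [Fintype n] [DecidableEq n]
    {A B : Matrix n n ℤ} {k : ℤ} (hk : 0 < k) (hAB : A * B = k • 1) (hBA : B * A = k • 1)
    (f : n → ℤ) :
    (∃ c : n → ℕ, f = (fun i => (c i : ℤ)) ᵥ* A) ↔ ∀ i, 0 ≤ (f ᵥ* B) i ∧ k ∣ (f ᵥ* B) i := by
  constructor
  · rintro ⟨c, rfl⟩ i
    rw [vecMul_vecMul, hAB, vecMul_smul, vecMul_one]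
    exact ⟨by simp only [Pi.smul_apply, smul_eq_mul]; positivity, dvd_mul_right _ _⟩
  · intro h
    choose hnonneg d hd using h
    have hd_nonneg (i : n) : 0 ≤ d i :=
      nonneg_of_mul_nonneg_right (hd i ▸ hnonneg i) hk
    refine ⟨fun i => (d i).toNat, ?_⟩
    simp only [Int.toNat_of_nonneg (hd_nonneg _)]
    apply smul_right_injective _ hk.ne'
    calc k • f = f ᵥ* (B * A) := by rw [hBA, vecMul_smul, vecMul_one]
      _ = (k • d) ᵥ* A := by rw [← vecMul_vecMul]; congr 1; ext i; simp [hd]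
      _ = k • (d ᵥ* A) := smul_vecMul _ _ _

namespace E8

def IsDoubledRoot (f : Fin 8 → ℤ) : Prop :=
  f ⬝ᵥ f = 8 ∧ ((∀ i, Even (f i)) ∨ ∀ i, Odd (f i)) ∧ 4 ∣ ∑ i, f i

instance : DecidablePred IsDoubledRoot := fun _ => by unfold IsDoubledRoot; infer_instance

theorem mem_E8Delta_iff {v : E8Space} : v ∈ E8Delta ↔ ∃ f, IsDoubledRoot f ∧ halfVec f = v := by
  have hcoords : ((∀ i, ∃ n : ℤ, v i = n) ∨ ∀ i, ∃ n : ℤ, v i = n + 1 / 2) ↔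
      ∃ f, ((∀ i, Even (f i)) ∨ ∀ i, Odd (f i)) ∧ halfVec f = v := by
    simp only [exists_intCast_eq_iff, exists_intCast_add_half_eq_iff, ← exists_halfVec_eq_iff,
      or_and_right, exists_or]
  have hnorm (f : Fin 8 → ℤ) : ⟪halfVec f, halfVec f⟫ = 2 ↔ f ⬝ᵥ f = 8 := by
    rw [inner_halfVec, div_eq_iff (by norm_num)]
    norm_cast
  have hsum (f : Fin 8 → ℤ) : (∃ m : ℤ, ∑ i, halfVec f i = 2 * m) ↔ 4 ∣ ∑ i, f i := by
    refine exists_congr fun m => ?_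
    rw [sum_halfVec, div_eq_iff two_ne_zero]
    constructor <;> intro h
    · exact_mod_cast (show ((∑ i, f i : ℤ) : ℝ) = ((4 * m : ℤ) : ℝ) by rw [h]; push_cast; ring)
    · rw [h]; push_cast; ring
  constructor
  · rintro ⟨hn, hc, hs⟩
    obtain ⟨f, hf, rfl⟩ := hcoords.1 hc
    exact ⟨f, ⟨(hnorm f).1 hn, hf, (hsum f).1 hs⟩, rfl⟩
  · rintro ⟨f, ⟨hn, hf, hs⟩, rfl⟩
    exact ⟨(hnorm f).2 hn, hcoords.2 ⟨f, hf, rfl⟩, (hsum f).2 hs⟩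

def doubledSimpleRoot : Fin 8 → Fin 8 → ℤ :=
  ![![1, -1, -1, -1, -1, -1, -1, 1],
    ![0, 0, 0, 0, 0, -2, 2, 0],
    ![0, 0, 0, 0, -2, 2, 0, 0],
    ![0, 0, 0, -2, 2, 0, 0, 0],
    ![0, 0, -2, 2, 0, 0, 0, 0],
    ![2, 2, 0, 0, 0, 0, 0, 0],
    ![0, -2, 2, 0, 0, 0, 0, 0],
    ![-2, 2, 0, 0, 0, 0, 0, 0]]

theorem simpleRootE8_eq_halfVec (i : Fin 8) : simpleRootE8 i = halfVec (doubledSimpleRoot i) := by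
  ext j
  fin_cases i <;> fin_cases j <;> norm_num [simpleRootE8, doubledSimpleRoot]

/-- Column `j` is the fundamental weight `ωⱼ` (`⟪αᵢ, ωⱼ⟫ = δᵢⱼ`) in doubled coordinates, so
`f ᵥ* doubledFundWeights` is four times the coefficient vector of `halfVec f` in the basis of
simple roots. -/
def doubledFundWeights : Matrix (Fin 8) (Fin 8) ℤ :=
  !![0, 0, 0, 0, 0, 1, 0, -1;
    0, 0, 0, 0, 0, 1, 0, 1;
    0, 0, 0, 0, 0, 1, 2, 1;
    0, 0, 0, 0, 2, 1, 2, 1;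
    0, 0, 0, 2, 2, 1, 2, 1;
    0, 0, 2, 2, 2, 1, 2, 1;
    0, 2, 2, 2, 2, 1, 2, 1;
    4, 2, 4, 6, 8, 5, 10, 7]

theorem doubledSimpleRoot_mul_doubledFundWeights :
    of doubledSimpleRoot * doubledFundWeights = (4 : ℤ) • 1 := by
  decide

theorem doubledFundWeights_mul_doubledSimpleRoot :
    doubledFundWeights * of doubledSimpleRoot = (4 : ℤ) • 1 := by
  decide

theorem sum_smul_simpleRootE8 (c : Fin 8 → ℤ) :
    ∑ i, (c i : ℝ) • simpleRootE8 i = halfVec (c ᵥ* of doubledSimpleRoot) := by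
  simp only [simpleRootE8_eq_halfVec, vecMul_eq_sum, map_sum, map_zsmul, Int.cast_smul_eq_zsmul]
  rfl

def IsDoubledPosRoot (f : Fin 8 → ℤ) : Prop :=
  IsDoubledRoot f ∧ ∀ i, 0 ≤ (f ᵥ* doubledFundWeights) i ∧ 4 ∣ (f ᵥ* doubledFundWeights) i

instance : DecidablePred IsDoubledPosRoot := fun _ => by unfold IsDoubledPosRoot; infer_instance

theorem mem_E8PosRoots_iff {v : E8Space} :
    v ∈ E8PosRoots ↔ ∃ f, IsDoubledPosRoot f ∧ halfVec f = v := by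
  have hcoeff (f : Fin 8 → ℤ) :
      (∃ c : Fin 8 → ℕ, halfVec f = ∑ i, (c i : ℝ) • simpleRootE8 i) ↔
        ∀ i, 0 ≤ (f ᵥ* doubledFundWeights) i ∧ 4 ∣ (f ᵥ* doubledFundWeights) i := by
    rw [← exists_natCast_vecMul_eq_iff four_pos doubledSimpleRoot_mul_doubledFundWeights
      doubledFundWeights_mul_doubledSimpleRoot]
    refine exists_congr fun c => ?_
    rw [← halfVec_injective.eq_iff, ← sum_smul_simpleRootE8]
    simp
  constructor
  · rintro ⟨hv, hc⟩
    obtain ⟨f, hf, rfl⟩ := mem_E8Delta_iff.1 hv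
    exact ⟨f, ⟨hf, (hcoeff f).1 hc⟩, rfl⟩
  · rintro ⟨f, ⟨hf, hc⟩, rfl⟩
    exact ⟨mem_E8Delta_iff.2 ⟨f, hf, rfl⟩, (hcoeff f).2 hc⟩

theorem halfVec_mem_E8PosRoots_iff {f : Fin 8 → ℤ} :
    halfVec f ∈ E8PosRoots ↔ IsDoubledPosRoot f := by
  simp [mem_E8PosRoots_iff, halfVec_injective.eq_iff]

theorem isDoubledRoot_sub_iff {f g : Fin 8 → ℤ} (hf : IsDoubledRoot f) (hg : IsDoubledRoot g) :
    IsDoubledRoot (g - f) ↔ f ⬝ᵥ g = 4 := by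
  obtain ⟨hfn, hfp, hfs⟩ := hf
  obtain ⟨hgn, hgp, hgs⟩ := hg
  have hnorm : (g - f) ⬝ᵥ (g - f) = 16 - 2 * (f ⬝ᵥ g) := by
    rw [sub_dotProduct, dotProduct_sub, dotProduct_sub, hfn, hgn, dotProduct_comm g f]
    ring
  refine ⟨fun h => by linarith [h.1], fun h => ⟨by rw [hnorm, h]; norm_num, ?_, ?_⟩⟩
  · simp only [Pi.sub_apply]
    rcases hfp with hf | hf <;> rcases hgp with hg | hg
    exacts [.inl fun i => (hg i).sub (hf i), .inr fun i => (hg i).sub_even (hf i),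
      .inr fun i => (hg i).sub_odd (hf i), .inl fun i => (hg i).sub_odd (hf i)]
  · simpa only [Pi.sub_apply, Finset.sum_sub_distrib] using dvd_sub hgs hfs

theorem isDoubledPosRoot_sub_iff {f g : Fin 8 → ℤ} (hf : IsDoubledPosRoot f)
    (hg : IsDoubledPosRoot g) :
    IsDoubledPosRoot (g - f) ↔
      f ⬝ᵥ g = 4 ∧ ∀ i, (f ᵥ* doubledFundWeights) i ≤ (g ᵥ* doubledFundWeights) i := by
  rw [IsDoubledPosRoot, isDoubledRoot_sub_iff hf.1 hg.1, sub_vecMul]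
  refine and_congr_right fun _ => forall_congr' fun i => ?_
  rw [Pi.sub_apply, sub_nonneg]
  exact and_iff_left (dvd_sub (hg.2 i).2 (hf.2 i).2)

def doubledRootCandidates : List (Fin 8 → ℤ) :=
  sqNormVecs [-2, 0, 2] 8 8 ++ sqNormVecs [-1, 1] 8 8

theorem nodup_doubledRootCandidates : doubledRootCandidates.Nodup := by
  refine (nodup_sqNormVecs (by decide) 8 8).append (nodup_sqNormVecs (by decide) 8 8)
    (List.disjoint_left.2 fun f h₁ h₂ => ?_)
  have h₁ := (mem_sqNormVecs.1 h₁).1 0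
  have h₂ := (mem_sqNormVecs.1 h₂).1 0
  simp only [List.mem_cons, List.not_mem_nil, or_false] at h₁ h₂
  omega

theorem mem_doubledRootCandidates {f : Fin 8 → ℤ} (hf : IsDoubledRoot f) :
    f ∈ doubledRootCandidates := by
  obtain ⟨hn, hpar, -⟩ := hf
  have hbound (i : Fin 8) : -2 ≤ f i ∧ f i ≤ 2 := by
    have : f i * f i ≤ 8 :=
      hn ▸ Finset.single_le_sum (fun j _ => mul_self_nonneg (f j)) (Finset.mem_univ i)
    constructor <;> nlinarith
  rw [doubledRootCandidates, List.mem_append, mem_sqNormVecs, mem_sqNormVecs]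
  simp only [List.mem_cons, List.not_mem_nil, or_false]
  rcases hpar with h | h
  · exact .inl ⟨fun i => by obtain ⟨k, hk⟩ := h i; have := hbound i; omega, hn⟩
  · exact .inr ⟨fun i => by obtain ⟨k, hk⟩ := h i; have := hbound i; omega, hn⟩

def doubledPosRoots : Finset (Fin 8 → ℤ) :=
  Finset.filter IsDoubledPosRoot ⟨doubledRootCandidates, nodup_doubledRootCandidates⟩

theorem mem_doubledPosRoots {f : Fin 8 → ℤ} : f ∈ doubledPosRoots ↔ IsDoubledPosRoot f := by
  simp only [doubledPosRoots, Finset.mem_filter]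
  exact and_iff_right_of_imp fun hf => mem_doubledRootCandidates hf.1

/-- For `IsDoubledPosRoot f`, the positive `g` with `g - f` positive (`isDoubledPosRoot_sub_iff`),
in a form that the kernel evaluates much faster. -/
def doubledPosRootsAbove (f : Fin 8 → ℤ) : Finset (Fin 8 → ℤ) :=
  {g ∈ doubledPosRoots |
    f ⬝ᵥ g = 4 ∧ ∀ i, (f ᵥ* doubledFundWeights) i ≤ (g ᵥ* doubledFundWeights) i}

theorem card_doubledPosRootsAbove : ∀ f ∈ doubledPosRoots,
    if ∃ i, doubledSimpleRoot i = f then (doubledPosRootsAbove f).card = 28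
    else (doubledPosRootsAbove f).card < 28 := by
  decide +kernel

theorem setOf_sub_mem_E8PosRoots {f : Fin 8 → ℤ} (hf : IsDoubledPosRoot f) :
    {β ∈ E8PosRoots | β - halfVec f ∈ E8PosRoots} = halfVec '' ↑(doubledPosRootsAbove f) := by
  ext β
  simp only [Set.mem_ofPred_eq, Set.mem_image, doubledPosRootsAbove, Finset.coe_filter,
    mem_doubledPosRoots]
  constructor
  · rintro ⟨hβ, hd⟩
    obtain ⟨g, hg, rfl⟩ := mem_E8PosRoots_iff.1 hβ
    rw [← map_sub, halfVec_mem_E8PosRoots_iff, isDoubledPosRoot_sub_iff hf hg] at hd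
    exact ⟨g, ⟨hg, hd⟩, rfl⟩
  · rintro ⟨g, ⟨hg, hd⟩, rfl⟩
    rw [← map_sub, halfVec_mem_E8PosRoots_iff, halfVec_mem_E8PosRoots_iff,
      isDoubledPosRoot_sub_iff hf hg]
    exact ⟨hg, hd⟩

end E8

open E8

/-- For each positive root α of E₈, the number of positive roots β with β − α again
a positive root is at most 28, with equality exactly when α is a simple root. -/
theorem E8_posRoot_difference_count (α : E8Space) (hα : α ∈ E8PosRoots) :
    {β ∈ E8PosRoots | β - α ∈ E8PosRoots}.ncard ≤ 28 ∧
    ({β ∈ E8PosRoots | β - α ∈ E8PosRoots}.ncard = 28 ↔ α ∈ Set.range simpleRootE8) := by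
  obtain ⟨f, hf, rfl⟩ := mem_E8PosRoots_iff.1 hα
  have hsimple : halfVec f ∈ Set.range simpleRootE8 ↔ ∃ i, doubledSimpleRoot i = f := by
    simp only [Set.mem_range, simpleRootE8_eq_halfVec, halfVec_injective.eq_iff]
  have hcount := card_doubledPosRootsAbove f (mem_doubledPosRoots.2 hf)
  rw [setOf_sub_mem_E8PosRoots hf, Set.ncard_image_of_injective _ halfVec_injective,
    Set.ncard_coe_finset, hsimple]
  split_ifs at hcount with h
  · exact ⟨hcount.le, iff_of_true hcount h⟩
  · exact ⟨hcount.le, iff_of_false hcount.ne h⟩
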